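/- arXiv:1401.1625 — 2 statements merged into one kernel-verified Lean document; each statement's English description precedes it below -/
import Mathlib

section
/- For every positive integer n and real t ≠ 0, the n-th derivative of the function t ↦ e^(1/t) equals (-1)^n · e^(1/t) · Σ_{k=1}^{n} L(n,k) / t^(n+k), where L(n,k) = C(n-1,k-1)·n!/k! are the Lah numbers. -/
/-! With `u = 1/t`, the derivative of `exp u · q(u)` is `-exp u · u² (q + q')(u)`, so the `n`-th
derivative of `exp (1/t)` is `(-1)ⁿ exp (1/t) Pₙ(1/t)` with `P₀ = 1` and `Pₙ₊₁ = X² (Pₙ + Pₙ')`.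
The Lah recurrence `L(n+1,k) = (n+k) L(n,k) + L(n,k-1)` says precisely that, from `n = 1` on,
`∑ₖ L(n,k) Xⁿ⁺ᵏ` satisfies the same recursion. -/

open Finset

/-- Stirling numbers of the second kind. -/
def stirling : ℕ → ℕ → ℕ
  | 0, 0 => 1
  | 0, _ + 1 => 0
  | _ + 1, 0 => 0
  | n + 1, k + 1 => stirling n k + (k + 1) * stirling n (k + 1)

/-- Bell numbers, via the standard binomial recurrence. -/
def bell : ℕ → ℕ
  | 0 => 1
  | n + 1 => ∑ k ∈ (Finset.range (n + 1)).attach, Nat.choose n k.1 * bell k.1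
decreasing_by exact Nat.lt_succ_of_le (Nat.lt_succ_iff.mp (Finset.mem_range.mp k.2))

/-- Lah numbers: L(n,k) = C(n-1,k-1) · n!/k! for k ≥ 1, L(0,0)=1, L(n,0)=0 for n ≥ 1. -/
def lah (n k : ℕ) : ℕ :=
  if k = 0 then (if n = 0 then 1 else 0)
  else (n - 1).choose (k - 1) * Nat.factorial n / Nat.factorial k

open Polynomial Real

open scoped Nat Topology

theorem lah_succ_zero (n : ℕ) : lah (n + 1) 0 = 0 := by
  simp [lah]

theorem lah_succ_succ_mul_factorial (n k : ℕ) :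
    lah (n + 1) (k + 1) * (k + 1)! = n.choose k * (n + 1)! := by
  refine Nat.div_mul_cancel ?_
  rcases le_or_gt k n with hkn | hnk
  · exact (Nat.factorial_dvd_factorial (by omega)).mul_left _
  · simp [Nat.choose_eq_zero_of_lt hnk]

theorem lah_succ_one (n : ℕ) : lah (n + 1) 1 = (n + 1)! := by
  simpa using lah_succ_succ_mul_factorial n 0

theorem lah_succ_succ_eq_zero_of_lt {n k : ℕ} (h : n < k) : lah (n + 1) (k + 1) = 0 := by
  simp [lah, Nat.choose_eq_zero_of_lt h]

theorem Nat.add_two_mul_choose_succ_succ (n k : ℕ) :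
    (n + 2) * (n + 1).choose (k + 1) = (n + k + 3) * n.choose (k + 1) + (k + 2) * n.choose k := by
  have hpascal := Nat.choose_succ_succ' n k
  have habsorb := Nat.add_one_mul_choose_eq n k
  zify at hpascal habsorb ⊢
  linear_combination (n + k + 3 : ℤ) * hpascal + habsorb

theorem lah_succ_succ (n k : ℕ) :
    lah (n + 2) (k + 1) = (n + k + 2) * lah (n + 1) (k + 1) + lah (n + 1) k := by
  rcases k with _ | k
  · simp [lah_succ_one, lah_succ_zero, Nat.factorial_succ (n + 1)]
  refine Nat.eq_of_mul_eq_mul_right (Nat.factorial_pos (k + 2)) ?_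
  calc lah (n + 2) (k + 2) * (k + 2)! = (n + 1).choose (k + 1) * (n + 2)! :=
        lah_succ_succ_mul_factorial _ _
    _ = (n + 1)! * ((n + 2) * (n + 1).choose (k + 1)) := by rw [Nat.factorial_succ (n + 1)]; ring
    _ = (n + 1)! * ((n + k + 3) * n.choose (k + 1) + (k + 2) * n.choose k) := by
        rw [Nat.add_two_mul_choose_succ_succ]
    _ = (n + k + 3) * (lah (n + 1) (k + 2) * (k + 2)!) + (k + 2) * (lah (n + 1) (k + 1) * (k + 1)!) := by
        rw [lah_succ_succ_mul_factorial, lah_succ_succ_mul_factorial]; ring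
    _ = ((n + (k + 1) + 2) * lah (n + 1) (k + 2) + lah (n + 1) (k + 1)) * (k + 2)! := by
        rw [Nat.factorial_succ (k + 1)]; ring

-- Indexed from `0` so that differentiating the monomials involves no truncated subtraction.
noncomputable def lahPoly (n : ℕ) : ℕ[X] :=
  ∑ k ∈ range n, C (lah n (k + 1)) * X ^ (n + k + 1)

theorem lahPoly_succ_succ (n : ℕ) :
    lahPoly (n + 2) = X ^ 2 * (lahPoly (n + 1) + derivative (lahPoly (n + 1))) := by
  have hsplit : lahPoly (n + 2) =
      ∑ k ∈ range (n + 2), C ((n + k + 2) * lah (n + 1) (k + 1)) * X ^ (n + k + 3) +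
        ∑ k ∈ range (n + 2), C (lah (n + 1) k) * X ^ (n + k + 3) := by
    rw [lahPoly, ← sum_add_distrib]
    refine sum_congr rfl fun k _ => ?_
    rw [lah_succ_succ, map_add, add_mul]
    ring_nf
  have hfirst : ∑ k ∈ range (n + 2), C ((n + k + 2) * lah (n + 1) (k + 1)) * X ^ (n + k + 3) =
      ∑ k ∈ range (n + 1), C ((n + k + 2) * lah (n + 1) (k + 1)) * X ^ (n + k + 3) := by
    rw [sum_range_succ, lah_succ_succ_eq_zero_of_lt (by omega)]
    simp
  have hsecond : ∑ k ∈ range (n + 2), C (lah (n + 1) k) * X ^ (n + k + 3) =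
      ∑ k ∈ range (n + 1), C (lah (n + 1) (k + 1)) * X ^ (n + k + 4) := by
    rw [sum_range_succ', lah_succ_zero]
    simp only [map_zero, zero_mul, add_zero]
    refine sum_congr rfl fun k _ => by ring_nf
  rw [hsplit, hfirst, hsecond, lahPoly, derivative_sum, mul_add, mul_sum, mul_sum,
    add_comm, ← sum_add_distrib, ← sum_add_distrib]
  refine sum_congr rfl fun k _ => ?_
  simp only [derivative_C_mul_X_pow, Nat.add_sub_cancel, Nat.cast_id]
  ring_nf

noncomputable def expInvPoly : ℕ → ℕ[X]
  | 0 => 1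
  | n + 1 => X ^ 2 * (expInvPoly n + derivative (expInvPoly n))

theorem expInvPoly_eq_lahPoly {n : ℕ} (hn : n ≠ 0) : expInvPoly n = lahPoly n := by
  induction n with
  | zero => contradiction
  | succ n ih =>
    rcases n with _ | n
    · simp [expInvPoly, lahPoly, lah]
    · rw [expInvPoly, ih n.succ_ne_zero, lahPoly_succ_succ]

theorem hasDerivAt_exp_inv_mul_aeval_inv {R : Type*} [CommSemiring R] [Algebra R ℝ] (q : R[X])
    {t : ℝ} (ht : t ≠ 0) :
    HasDerivAt (fun s => exp s⁻¹ * aeval s⁻¹ q)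
      (-(exp t⁻¹ * aeval t⁻¹ (X ^ 2 * (q + derivative q)))) t := by
  have hinv : HasDerivAt (fun s : ℝ => s⁻¹) (-(t ^ 2)⁻¹) t := hasDerivAt_inv ht
  refine (hinv.exp.fun_mul ((q.hasDerivAt_aeval t⁻¹).comp t hinv)).congr_deriv ?_
  simp only [Function.comp_apply, map_mul, map_add, map_pow, aeval_X, inv_pow]
  ring

theorem iteratedDeriv_exp_inv (n : ℕ) {t : ℝ} (ht : t ≠ 0) :
    iteratedDeriv n (fun s => exp s⁻¹) t = (-1) ^ n * (exp t⁻¹ * aeval t⁻¹ (expInvPoly n)) := by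
  induction n generalizing t with
  | zero => simp [expInvPoly]
  | succ n ih =>
    have hnear : iteratedDeriv n (fun s => exp s⁻¹) =ᶠ[𝓝 t]
        fun s => (-1) ^ n * (exp s⁻¹ * aeval s⁻¹ (expInvPoly n)) :=
      (eventually_ne_nhds ht).mono fun s hs => ih hs
    rw [iteratedDeriv_succ, hnear.deriv_eq,
      ((hasDerivAt_exp_inv_mul_aeval_inv _ ht).const_mul _).deriv, expInvPoly]
    ring

theorem iteratedDeriv_exp_one_div (n : ℕ) (hn : 1 ≤ n) (t : ℝ) (ht : t ≠ 0) :
    iteratedDeriv n (fun t : ℝ => Real.exp (1 / t)) t =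
      (-1 : ℝ) ^ n * Real.exp (1 / t) *
        ∑ k ∈ Finset.Icc 1 n, (lah n k : ℝ) / t ^ (n + k) := by
  simp only [one_div]
  rw [iteratedDeriv_exp_inv n ht, expInvPoly_eq_lahPoly (by omega), lahPoly,
    ← Ico_add_one_right_eq_Icc, sum_Ico_eq_sum_range]
  simp [mul_sum, div_eq_mul_inv, mul_assoc, add_comm, add_assoc]
end

section
/- For every positive integer n, the identity Σ_{k=1}^{n} (-1)^(n-k) · (Σ_{ℓ=1}^{k} L(k,ℓ)) · S(n,k) = Σ_{k=1}^{n} S(n,k) holds, where L(k,ℓ) = C(k-1,ℓ-1)·k!/ℓ! are Lah numbers and S(n,k) are Stirling numbers of the second kind. -/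
open Finset

/-!
Write `x⁽ᵏ⁾` and `x₍ₖ₎` for the rising and falling factorials. Then `xⁿ = ∑ₖ S(n,k) x₍ₖ₎`, and
substituting `-x` gives `xⁿ = ∑ₖ (-1)ⁿ⁻ᵏ S(n,k) x⁽ᵏ⁾`. Expanding `x⁽ᵏ⁾ = ∑_ℓ L(k,ℓ) x₍ℓ₎` and
comparing coefficients in the basis of falling factorials gives
`∑ₖ (-1)ⁿ⁻ᵏ S(n,k) L(k,ℓ) = S(n,ℓ)` for every `ℓ`; summing over `ℓ` proves the theorem.
-/

open Nat

theorem stirling_eq_stirlingSecond : ∀ n k, stirling n k = stirlingSecond n k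
  | 0, 0 | 0, _ + 1 | _ + 1, 0 => rfl
  | n + 1, k + 1 => by
    rw [stirling, Nat.stirlingSecond_succ_succ, stirling_eq_stirlingSecond n k,
      stirling_eq_stirlingSecond n (k + 1), add_comm]

-- The closed formula in `lah` gives the junk value `lah 0 1 = 1`; the recurrence needs `0`.
def lahNumber : ℕ → ℕ → ℕ
  | 0, 0 => 1
  | 0, _ + 1 => 0
  | _ + 1, 0 => 0
  | n + 1, k + 1 => lahNumber n k + (n + k + 1) * lahNumber n (k + 1)

theorem lahNumber_eq_zero_of_lt : ∀ {n k : ℕ}, n < k → lahNumber n k = 0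
  | 0, _ + 1, _ => rfl
  | n + 1, k + 1, h => by
    rw [lahNumber, lahNumber_eq_zero_of_lt (by omega), lahNumber_eq_zero_of_lt (by omega),
      mul_zero, add_zero]

theorem lahNumber_succ_mul_factorial (n k : ℕ) :
    lahNumber (n + 1) (k + 1) * (k + 1)! = n.choose k * (n + 1)! := by
  induction n generalizing k with
  | zero => cases k <;> simp [lahNumber]
  | succ n ih =>
    cases k with
    | zero =>
      have h := ih 0
      simp only [lahNumber, zero_add, Nat.choose_zero_right, one_mul, Nat.factorial_one,
        mul_one] at h ⊢
      rw [h, Nat.factorial_succ (n + 1)]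
    | succ k =>
      have key : (k + 2) * n.choose k + (n + k + 3) * n.choose (k + 1) =
          (n + 1).choose (k + 1) * (n + 2) := by
        have h := Nat.add_one_mul_choose_eq n k
        rw [Nat.choose_succ_succ] at h ⊢
        linarith
      calc lahNumber (n + 2) (k + 2) * (k + 2)!
          = (k + 2) * (lahNumber (n + 1) (k + 1) * (k + 1)!) +
              (n + k + 3) * (lahNumber (n + 1) (k + 2) * (k + 2)!) := by
            rw [lahNumber, Nat.factorial_succ (k + 1)]; ring
        _ = ((k + 2) * n.choose k + (n + k + 3) * n.choose (k + 1)) * (n + 1)! := by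
            rw [ih, ih]; ring
        _ = (n + 1).choose (k + 1) * (n + 2)! := by
            rw [key, Nat.factorial_succ (n + 1)]; ring

theorem lah_eq_lahNumber {n : ℕ} (hn : n ≠ 0) (k : ℕ) : lah n k = lahNumber n k := by
  obtain ⟨n, rfl⟩ : ∃ m, n = m + 1 := ⟨n - 1, by omega⟩
  rcases k with _ | k
  · rfl
  · rw [lah, if_neg k.succ_ne_zero, Nat.add_sub_cancel, Nat.add_sub_cancel,
      ← lahNumber_succ_mul_factorial, Nat.mul_div_cancel _ (Nat.factorial_pos _)]

namespace Polynomial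

variable {R : Type*} [CommRing R]

theorem descPochhammer_mul_X_add_natCast (k c : ℕ) :
    descPochhammer R k * (X + (c : R[X])) =
      descPochhammer R (k + 1) + ((c + k : ℕ) : R[X]) * descPochhammer R k := by
  rw [descPochhammer_succ_right]; push_cast; ring

theorem eq_sum_mul_descPochhammer_of_recurrence {p : ℕ → R[X]} {c : ℕ → ℕ} {a : ℕ → ℕ → ℕ}
    (hp₀ : p 0 = 1) (hp : ∀ n, p (n + 1) = p n * (X + (c n : R[X])))
    (ha₀₀ : a 0 0 = 1) (ha₀ : ∀ n, a (n + 1) 0 = c n * a n 0) (ha_top : ∀ n, a n (n + 1) = 0)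
    (ha : ∀ n k, a (n + 1) (k + 1) = a n k + (c n + k + 1) * a n (k + 1)) (n : ℕ) :
    p n = ∑ k ∈ range (n + 1), (a n k : R[X]) * descPochhammer R k := by
  induction n with
  | zero => simp [hp₀, ha₀₀]
  | succ n ih =>
    have hshift : ∑ k ∈ range (n + 1), (a n k : R[X]) * ((c n + k : ℕ) * descPochhammer R k) =
        ∑ k ∈ range (n + 1),
            (a n (k + 1) : R[X]) * ((c n + (k + 1) : ℕ) * descPochhammer R (k + 1)) +
          (a (n + 1) 0 : R[X]) * descPochhammer R 0 := by
      rw [sum_range_succ', sum_range_succ (fun k => (a n (k + 1) : R[X]) * _), ha_top, ha₀]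
      push_cast
      ring
    calc p (n + 1)
        = ∑ k ∈ range (n + 1), (a n k : R[X]) * (descPochhammer R k * (X + (c n : R[X]))) := by
          simp only [hp, ih, sum_mul, mul_assoc]
      _ = ∑ k ∈ range (n + 1), (a n k : R[X]) * descPochhammer R (k + 1) +
            ∑ k ∈ range (n + 1), (a n k : R[X]) * ((c n + k : ℕ) * descPochhammer R k) := by
          rw [← sum_add_distrib]
          exact sum_congr rfl fun k _ => by rw [descPochhammer_mul_X_add_natCast, mul_add]
      _ = ∑ k ∈ range (n + 1), (a (n + 1) (k + 1) : R[X]) * descPochhammer R (k + 1) +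
            (a (n + 1) 0 : R[X]) * descPochhammer R 0 := by
          rw [hshift, ← add_assoc, ← sum_add_distrib]
          congr 1
          refine sum_congr rfl fun k _ => ?_
          rw [ha]
          push_cast
          ring
      _ = _ := (sum_range_succ' (fun k => (a (n + 1) k : R[X]) * descPochhammer R k) _).symm

theorem X_pow_eq_sum_stirlingSecond_mul_descPochhammer (n : ℕ) :
    (X : R[X]) ^ n = ∑ k ∈ range (n + 1), (stirlingSecond n k : R[X]) * descPochhammer R k :=
  eq_sum_mul_descPochhammer_of_recurrence (c := fun _ => 0) (pow_zero X)
    (fun n => by rw [pow_succ, Nat.cast_zero, add_zero]) rfl (fun _ => (zero_mul _).symm)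
    (fun n => stirlingSecond_eq_zero_of_lt n.lt_succ_self)
    (fun n k => by rw [stirlingSecond_succ_succ]; ring) n

theorem ascPochhammer_eq_sum_lahNumber_mul_descPochhammer (n : ℕ) :
    ascPochhammer R n = ∑ k ∈ range (n + 1), (lahNumber n k : R[X]) * descPochhammer R k :=
  eq_sum_mul_descPochhammer_of_recurrence (c := id) (ascPochhammer_zero R)
    (ascPochhammer_succ_right R) rfl (fun n => by cases n <;> rfl)
    (fun n => lahNumber_eq_zero_of_lt n.lt_succ_self) (fun _ _ => rfl) n

theorem descPochhammer_comp_neg_X (n : ℕ) :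
    (descPochhammer R n).comp (-X) = (-1) ^ n * ascPochhammer R n := by
  induction n with
  | zero => simp
  | succ n ih =>
    rw [descPochhammer_succ_right, mul_comp, ih, ascPochhammer_succ_right, sub_comp, X_comp,
      natCast_comp]
    ring

theorem X_pow_eq_sum_neg_one_pow_mul_stirlingSecond_mul_ascPochhammer (n : ℕ) :
    (X : R[X]) ^ n = ∑ k ∈ range (n + 1),
      (-1) ^ (n - k) * (stirlingSecond n k : R[X]) * ascPochhammer R k := by
  have h := congrArg (·.comp (-X)) (X_pow_eq_sum_stirlingSecond_mul_descPochhammer (R := R) n)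
  simp only [pow_comp, X_comp, sum_comp, mul_comp, natCast_comp, descPochhammer_comp_neg_X,
    neg_pow (X : R[X])] at h
  calc (X : R[X]) ^ n = (-1) ^ n * ((-1) ^ n * X ^ n) := by
        rw [← mul_assoc, ← mul_pow]; simp
    _ = _ := by
      rw [h, mul_sum]
      refine sum_congr rfl fun k hk => ?_
      obtain ⟨j, rfl⟩ := Nat.exists_eq_add_of_le (Nat.lt_succ_iff.mp (mem_range.mp hk))
      have hsq : ((-1 : R[X]) ^ k) ^ 2 = 1 := by rw [← pow_mul, pow_mul', neg_one_sq, one_pow]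
      rw [Nat.add_sub_cancel_left, pow_add]
      linear_combination ((-1) ^ j * (stirlingSecond (k + j) k : R[X]) * ascPochhammer R k) * hsq

theorem linearIndependent_descPochhammer [IsDomain R] : LinearIndependent R (descPochhammer R) :=
  Sequence.linearIndependent ⟨descPochhammer R, fun n => by
    rw [degree_eq_natDegree (monic_descPochhammer R n).ne_zero, descPochhammer_natDegree]⟩

end Polynomial

open Polynomial in
theorem sum_neg_one_pow_mul_stirlingSecond_mul_lahNumber (n ℓ : ℕ) :
    ∑ k ∈ range (n + 1), (-1 : ℤ) ^ (n - k) * stirlingSecond n k * lahNumber k ℓ =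
      stirlingSecond n ℓ := by
  set f : ℕ → ℤ := fun ℓ ↦
    ∑ k ∈ range (n + 1), (-1 : ℤ) ^ (n - k) * stirlingSecond n k * lahNumber k ℓ with hf
  rcases lt_or_ge n ℓ with hnℓ | hℓn
  · rw [stirlingSecond_eq_zero_of_lt hnℓ, Nat.cast_zero]
    refine sum_eq_zero fun k hk => ?_
    rw [lahNumber_eq_zero_of_lt (by grind), Nat.cast_zero, mul_zero]
  have hasc : ∀ k ≤ n, ascPochhammer ℤ k =
      ∑ ℓ ∈ range (n + 1), (lahNumber k ℓ : ℤ[X]) * descPochhammer ℤ ℓ := fun k hk => by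
    rw [ascPochhammer_eq_sum_lahNumber_mul_descPochhammer]
    refine sum_subset (range_subset_range.2 (by omega)) fun ℓ _ hℓ => ?_
    rw [lahNumber_eq_zero_of_lt (by grind), Nat.cast_zero, zero_mul]
  have hexp : (X : ℤ[X]) ^ n = ∑ ℓ ∈ range (n + 1), (f ℓ : ℤ[X]) * descPochhammer ℤ ℓ := by
    rw [X_pow_eq_sum_neg_one_pow_mul_stirlingSecond_mul_ascPochhammer]
    simp only [hf, Int.cast_sum, sum_mul]
    rw [sum_comm]
    refine sum_congr rfl fun k hk => ?_
    rw [hasc k (by grind), mul_sum]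
    refine sum_congr rfl fun ℓ _ => ?_
    push_cast
    ring
  have hdiff : ∑ ℓ ∈ range (n + 1), (f ℓ - stirlingSecond n ℓ) • descPochhammer ℤ ℓ = 0 := by
    simp only [sub_smul, sum_sub_distrib, smul_eq_C_mul, eq_intCast C, Int.cast_natCast]
    rw [← hexp, ← X_pow_eq_sum_stirlingSecond_mul_descPochhammer, sub_self]
  exact sub_eq_zero.mp <|
    linearIndependent_iff'.mp linearIndependent_descPochhammer _ _ hdiff ℓ (by grind)

theorem alternating_lah_stirling_sum_general (n : ℕ) :
    (∑ k ∈ Finset.Icc 1 n,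
        (-1 : ℤ) ^ (n - k) * (∑ ℓ ∈ Finset.Icc 1 k, (lah k ℓ : ℤ)) * stirling n k) =
      ∑ k ∈ Finset.Icc 1 n, (stirling n k : ℤ) := by
  have hlah : ∀ k ∈ Icc 1 n,
      ∑ ℓ ∈ Icc 1 k, (lah k ℓ : ℤ) = ∑ ℓ ∈ Icc 1 n, (lahNumber k ℓ : ℤ) := by
    intro k hk
    have hk0 : k ≠ 0 := by grind
    simp only [lah_eq_lahNumber hk0]
    refine sum_subset (Icc_subset_Icc_right (by grind)) fun ℓ _ hℓ => ?_
    rw [lahNumber_eq_zero_of_lt (by grind), Nat.cast_zero]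
  have hcoeff : ∀ ℓ ∈ Icc 1 n,
      ∑ k ∈ Icc 1 n, (-1 : ℤ) ^ (n - k) * stirlingSecond n k * lahNumber k ℓ =
        stirlingSecond n ℓ := by
    intro ℓ hℓ
    rw [← sum_neg_one_pow_mul_stirlingSecond_mul_lahNumber n ℓ]
    refine sum_subset (fun k hk => by grind) fun k _ hk => ?_
    rw [show k = 0 by grind, lahNumber_eq_zero_of_lt (by grind), Nat.cast_zero, mul_zero]
  simp only [stirling_eq_stirlingSecond]
  calc _ = ∑ k ∈ Icc 1 n, ∑ ℓ ∈ Icc 1 n,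
        (-1 : ℤ) ^ (n - k) * stirlingSecond n k * lahNumber k ℓ := by
        refine sum_congr rfl fun k hk => ?_
        rw [hlah k hk, mul_sum, sum_mul]
        refine sum_congr rfl fun ℓ _ => by ring
    _ = _ := by rw [sum_comm]; exact sum_congr rfl hcoeff

theorem alternating_lah_stirling_sum (n : ℕ) (hn : 1 ≤ n) :
    (∑ k ∈ Finset.Icc 1 n,
        (-1 : ℤ) ^ (n - k) * (∑ ℓ ∈ Finset.Icc 1 k, (lah k ℓ : ℤ)) * stirling n k) =
      ∑ k ∈ Finset.Icc 1 n, (stirling n k : ℤ) :=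
  alternating_lah_stirling_sum_general n
end
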